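/- As the sample size M increases (with nested samples), the SAA optimal value is monotonically nondecreasing in expectation: E[c_M] ≤ E[c_{M+1}], where c_M = min_{x∈X} (1/M)∑_{m=1}^M F(x,ω_m). -/

import Mathlib

/-!
Averaging the leave-one-out averages `(1/M) ∑_{m ≠ k} F(x, ω_m)` over `k` gives back the full
average `(1/(M+1)) ∑_m F(x, ω_m)`, and a minimum of an average is at least the average of the
minima. So `c_{M+1}` dominates the mean over `k` of the SAA values `c_M^{(k)}` computed without
sample `k`. The samples are exchangeable, so every `c_M^{(k)}` has the expectation of `c_M`.
-/

open MeasureTheory Finset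

theorem Finset.integrable_inf' {α ι β : Type*} [MeasurableSpace α] {μ : Measure α}
    [NormedAddCommGroup β] [Lattice β] [HasSolidNorm β] [IsOrderedAddMonoid β]
    {s : Finset ι} (hs : s.Nonempty) {f : ι → α → β} (hf : ∀ i ∈ s, Integrable (f i) μ) :
    Integrable (fun a => s.inf' hs fun i => f i a) μ := by
  simpa only [← Finset.inf'_apply] using
    Finset.inf'_induction hs f (p := fun g : α → β => Integrable g μ)
      (fun _ hg _ hh => Integrable.inf hg hh) hf

theorem Finset.sum_sum_univ_erase {ι R : Type*} [Fintype ι] [DecidableEq ι] [Ring R]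
    (a : ι → R) : ∑ k, ∑ m ∈ univ.erase k, a m = ((Fintype.card ι : R) - 1) * ∑ m, a m := by
  simp only [Finset.sum_erase_eq_sub (Finset.mem_univ _), Finset.sum_sub_distrib,
    Finset.sum_const, card_univ, nsmul_eq_mul, sub_one_mul]

theorem MeasureTheory.integral_comp_perm_pi {ι Ω E : Type*} [Fintype ι] [MeasurableSpace Ω]
    [NormedAddCommGroup E] [NormedSpace ℝ E] (P : Measure Ω) [SigmaFinite P]
    (σ : Equiv.Perm ι) (g : (ι → Ω) → E) :
    ∫ ωs, g (ωs ∘ σ) ∂(Measure.pi fun _ => P) = ∫ ωs, g ωs ∂(Measure.pi fun _ => P) := by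
  have hσ := measurePreserving_piCongrLeft (fun _ : ι => P) σ.symm
  convert hσ.integral_comp' (g := g) using 4 with ωs
  funext i
  simpa using (MeasurableEquiv.piCongrLeft_apply_apply (β := fun _ => Ω) σ.symm ωs (σ i)).symm

section SAA

variable {X Ω ι : Type*} [Fintype X] [Nonempty X]

/-- The SAA optimal value of the subsample indexed by `s`; the paper's `c_M` is the case
`s = {0, …, M-1}`. -/
noncomputable def saaValue (F : X → Ω → ℝ) (s : Finset ι) (ωs : ι → Ω) : ℝ :=
  univ.inf' univ_nonempty fun x => (#s : ℝ)⁻¹ * ∑ m ∈ s, F x (ωs m)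

theorem saaValue_comp_equiv (F : X → Ω → ℝ) (s : Finset ι) (σ : ι ≃ ι) (ωs : ι → Ω) :
    saaValue F s (ωs ∘ σ) = saaValue F (s.map σ.toEmbedding) ωs := by
  simp only [saaValue, Finset.card_map, Finset.sum_map, Function.comp_apply, Equiv.coe_toEmbedding]

theorem integrable_saaValue [MeasurableSpace Ω] [Fintype ι] (P : Measure Ω) [IsFiniteMeasure P]
    {F : X → Ω → ℝ} {C : ℝ} (hmeas : ∀ x, Measurable (F x)) (hbd : ∀ x ω, |F x ω| ≤ C)
    (s : Finset ι) : Integrable (saaValue F s) (Measure.pi fun _ => P) := by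
  refine Finset.integrable_inf' _ fun x _ => (integrable_finsetSum _ fun m _ => ?_).const_mul _
  exact Integrable.of_bound ((hmeas x).comp (measurable_pi_apply m)).aestronglyMeasurable C
    (ae_of_all _ fun ωs => hbd x (ωs m))

variable [Fintype ι] [DecidableEq ι]

theorem integral_saaValue_erase [MeasurableSpace Ω] (P : Measure Ω) [SigmaFinite P]
    (F : X → Ω → ℝ) (j k : ι) :
    ∫ ωs, saaValue F (univ.erase j) ωs ∂(Measure.pi fun _ => P)
      = ∫ ωs, saaValue F (univ.erase k) ωs ∂(Measure.pi fun _ => P) := by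
  rw [← integral_comp_perm_pi P (Equiv.swap j k)]
  simp only [saaValue_comp_equiv, Finset.map_erase, Finset.map_univ_equiv, Equiv.coe_toEmbedding,
    Equiv.swap_apply_left]

theorem inv_card_mul_sum_saaValue_erase_le (hι : 1 < Fintype.card ι) (F : X → Ω → ℝ)
    (ωs : ι → Ω) :
    (Fintype.card ι : ℝ)⁻¹ * ∑ k, saaValue F (univ.erase k) ωs ≤ saaValue F univ ωs := by
  refine Finset.le_inf' _ _ fun x _ => ?_
  have hcard : ∀ k : ι, (#(univ.erase k) : ℝ) = Fintype.card ι - 1 := fun k => by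
    rw [card_erase_of_mem (mem_univ k), card_univ, Nat.cast_sub hι.le, Nat.cast_one]
  have hne : (Fintype.card ι : ℝ) - 1 ≠ 0 := by
    rw [sub_ne_zero]; exact_mod_cast hι.ne'
  calc (Fintype.card ι : ℝ)⁻¹ * ∑ k, saaValue F (univ.erase k) ωs
      ≤ (Fintype.card ι : ℝ)⁻¹ *
          ∑ k, (#(univ.erase k) : ℝ)⁻¹ * ∑ m ∈ univ.erase k, F x (ωs m) := by
        gcongr with k
        exact Finset.inf'_le _ (mem_univ x)
    _ = (#(univ : Finset ι) : ℝ)⁻¹ * ∑ m, F x (ωs m) := by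
        simp only [hcard, ← Finset.mul_sum, Finset.sum_sum_univ_erase, card_univ,
          inv_mul_cancel_left₀ hne]

theorem integral_saaValue_erase_le [MeasurableSpace Ω] (P : Measure Ω) [IsFiniteMeasure P]
    {F : X → Ω → ℝ} {C : ℝ} (hmeas : ∀ x, Measurable (F x)) (hbd : ∀ x ω, |F x ω| ≤ C)
    (hι : 1 < Fintype.card ι) (j : ι) :
    ∫ ωs, saaValue F (univ.erase j) ωs ∂(Measure.pi fun _ => P)
      ≤ ∫ ωs, saaValue F (univ : Finset ι) ωs ∂(Measure.pi fun _ => P) := by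
  have hint : ∀ s : Finset ι, Integrable (saaValue F s) (Measure.pi fun _ => P) :=
    integrable_saaValue P hmeas hbd
  calc ∫ ωs, saaValue F (univ.erase j) ωs ∂(Measure.pi fun _ => P)
      = ∫ ωs, (Fintype.card ι : ℝ)⁻¹ * ∑ k, saaValue F (univ.erase k) ωs
          ∂(Measure.pi fun _ => P) := by
        have hcard : (Fintype.card ι : ℝ) ≠ 0 := by positivity
        rw [integral_const_mul, integral_finsetSum _ fun k _ => hint _]
        simp only [integral_saaValue_erase P F _ j, sum_const, card_univ, nsmul_eq_mul,
          inv_mul_cancel_left₀ hcard]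
    _ ≤ ∫ ωs, saaValue F (univ : Finset ι) ωs ∂(Measure.pi fun _ => P) :=
        integral_mono ((integrable_finsetSum _ fun k _ => hint _).const_mul _) (hint _)
          (inv_card_mul_sum_saaValue_erase_le hι F)

end SAA

/-- SAA monotonicity (Mak–Morton–Wood): with nested i.i.d. samples, the expected SAA
optimal value is nondecreasing in the sample size: `E[c_M] ≤ E[c_{M+1}]`, where
`c_M = min_{x∈X} (1/M) ∑_{m<M} F(x, ω_m)`. Both expectations are taken over the product
measure on `M+1` samples, with `c_M` using only the first `M` of them. -/
theorem stmt_3 {X Ω : Type*} [Fintype X] [Nonempty X] [MeasurableSpace Ω]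
    (P : Measure Ω) [IsProbabilityMeasure P] (M : ℕ) (hM : 0 < M)
    (F : X → Ω → ℝ) (C : ℝ)
    (hmeas : ∀ x, Measurable (F x)) (hbd : ∀ x ω, |F x ω| ≤ C) :
    ∫ ωs, (Finset.univ.inf' Finset.univ_nonempty fun x : X =>
          (1 / (M : ℝ)) * ∑ m : Fin M, F x (ωs m.castSucc))
        ∂(Measure.pi fun _ : Fin (M + 1) => P)
      ≤ ∫ ωs, (Finset.univ.inf' Finset.univ_nonempty fun x : X =>
          (1 / ((M : ℝ) + 1)) * ∑ m : Fin (M + 1), F x (ωs m))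
        ∂(Measure.pi fun _ : Fin (M + 1) => P) := by
  have hcard : 1 < Fintype.card (Fin (M + 1)) := by simpa using hM
  convert integral_saaValue_erase_le P hmeas hbd hcard (Fin.last M) using 3 <;>
    refine Finset.inf'_congr _ rfl fun x _ => ?_
  · rw [card_erase_of_mem (mem_univ _), card_univ, Fintype.card_fin, add_tsub_cancel_right,
      one_div, sum_erase_eq_sub (mem_univ _), Fin.sum_univ_castSucc, add_sub_cancel_right]
  · simp
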